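/- For every cyclic derivation D₄ : B → B* and every derivation D₁ : A → A*, the map D(a,b) = (D₁(a), D₄(b)) is a derivation from A ⊕_φ B into its dual, and D is inner if and only if both D₁ and D₄ are inner. Consequently H¹(A,A*) ⊕ H¹_c(B,B*) embeds linearly into H¹(A ⊕_φ B, (A ⊕_φ B)*). -/

import Mathlib

open NormedSpace

/-- The multiplication of the `φ`-Lau product `A ⊕_φ B`. -/
noncomputable def lauMul {A B : Type*} [NonUnitalNormedRing A] [NormedSpace ℂ A]
    [NonUnitalNormedRing B] [NormedSpace ℂ B] (φ : A →L[ℂ] ℂ)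
    (x y : A × B) : A × B :=
  (x.1 * y.1, φ x.1 • y.2 + φ y.1 • x.2 + x.2 * y.2)

/-- `D : A ⊕_φ B → (A ⊕_φ B)* ≅ A* × B*` is a derivation for the dual actions,
stated by pairing against an arbitrary `(c,d)`. -/
def IsDerLau {A B : Type*} [NonUnitalNormedRing A] [NormedSpace ℂ A]
    [NonUnitalNormedRing B] [NormedSpace ℂ B] (φ : A →L[ℂ] ℂ)
    (D : (A × B) →L[ℂ] (StrongDual ℂ A × StrongDual ℂ B)) : Prop :=
  ∀ (a a' : A) (b b' : B) (c : A) (d : B),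
    (D (lauMul φ (a, b) (a', b'))).1 c + (D (lauMul φ (a, b) (a', b'))).2 d
      = ((D (a', b')).1 (c * a) + (D (a', b')).2 b * φ c
          + φ a * (D (a', b')).2 d + (D (a', b')).2 (d * b))
        + ((D (a, b)).1 (a' * c) + (D (a, b)).2 b' * φ c
          + φ a' * (D (a, b)).2 d + (D (a, b)).2 (b' * d))

/-- `D` is the inner derivation implemented by some `(f,g) ∈ A* × B*`,
i.e. `D(x) = x·(f,g) − (f,g)·x`, stated by pairing against an arbitrary `(c,d)`. -/
def IsInnerLau {A B : Type*} [NonUnitalNormedRing A] [NormedSpace ℂ A]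
    [NonUnitalNormedRing B] [NormedSpace ℂ B] (φ : A →L[ℂ] ℂ)
    (D : (A × B) →L[ℂ] (StrongDual ℂ A × StrongDual ℂ B)) : Prop :=
  ∃ (f : StrongDual ℂ A) (g : StrongDual ℂ B), ∀ (a : A) (b : B) (c : A) (d : B),
    (D (a, b)).1 c + (D (a, b)).2 d
      = (f (c * a) + g b * φ c + φ a * g d + g (d * b))
        - (f (a * c) + g b * φ c + φ a * g d + g (b * d))

/-!
Pairing against `(c, d)`, the Leibniz identity for `D₁ × D₄` on `A ⊕_φ B` is the sum of the
Leibniz identities of `D₁` and `D₄` plus the term `φ c * (⟨b, D₄ b'⟩ + ⟨b', D₄ b⟩)`, which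
cyclicity of `D₄` kills. An implementing functional `(f, g)` of `D₁ × D₄`, tested at `(a, 0)`
and at `(0, b)`, implements `D₁` and `D₄` separately.
-/

section DualDerivation

variable {A : Type*} [NonUnitalNormedRing A] [NormedSpace ℂ A]

def IsDualDerivation (D : A →L[ℂ] StrongDual ℂ A) : Prop :=
  ∀ a a' c : A, D (a * a') c = D a' (c * a) + D a (a' * c)

def IsCyclicDual (D : A →L[ℂ] StrongDual ℂ A) : Prop :=
  ∀ a a' : A, D a' a + D a a' = 0

def IsInnerDual (D : A →L[ℂ] StrongDual ℂ A) : Prop :=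
  ∃ f : StrongDual ℂ A, ∀ a c : A, D a c = f (c * a) - f (a * c)

end DualDerivation

section LauProduct

variable {A B : Type*} [NonUnitalNormedRing A] [NormedSpace ℂ A]
  [NonUnitalNormedRing B] [NormedSpace ℂ B]

theorem isDerLau_prodMap (φ : A →L[ℂ] ℂ) {D₁ : A →L[ℂ] StrongDual ℂ A}
    {D₄ : B →L[ℂ] StrongDual ℂ B} (h₁ : IsDualDerivation D₁) (h₄ : IsDualDerivation D₄)
    (hc : IsCyclicDual D₄) : IsDerLau φ (D₁.prodMap D₄) := by
  intro a a' b b' c d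
  simp only [lauMul, ContinuousLinearMap.coe_prodMap', Prod.map_apply, map_add, map_smul,
    add_apply, smul_apply, smul_eq_mul]
  linear_combination h₁ a a' c + h₄ b b' d - φ c * hc b b'

theorem isInnerLau_prodMap_iff (φ : A →L[ℂ] ℂ) (D₁ : A →L[ℂ] StrongDual ℂ A)
    (D₄ : B →L[ℂ] StrongDual ℂ B) :
    IsInnerLau φ (D₁.prodMap D₄) ↔ IsInnerDual D₁ ∧ IsInnerDual D₄ := by
  constructor
  · rintro ⟨f, g, h⟩
    exact ⟨⟨f, fun a c => by simpa using h a 0 c 0⟩, ⟨g, fun b d => by simpa using h 0 b 0 d⟩⟩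
  · rintro ⟨⟨f, hf⟩, ⟨g, hg⟩⟩
    refine ⟨f, g, fun a b c d => ?_⟩
    simp only [ContinuousLinearMap.coe_prodMap', Prod.map_apply, hf a c, hg b d]
    ring

end LauProduct

theorem lau_cyclic_embedding_general {A B : Type*} [NonUnitalNormedRing A] [NormedSpace ℂ A]
    [NonUnitalNormedRing B] [NormedSpace ℂ B]
    (φ : A →L[ℂ] ℂ) :
    (∀ (D₁ : A →L[ℂ] StrongDual ℂ A) (D₄ : B →L[ℂ] StrongDual ℂ B),
      (∀ a a' c : A, D₁ (a * a') c = D₁ a' (c * a) + D₁ a (a' * c)) →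
      (∀ b b' d : B, D₄ (b * b') d = D₄ b' (d * b) + D₄ b (b' * d)) →
      (∀ b b' : B, D₄ b' b + D₄ b b' = 0) →
        IsDerLau φ (D₁.prodMap D₄) ∧
        (IsInnerLau φ (D₁.prodMap D₄) ↔
          ((∃ f : StrongDual ℂ A, ∀ a c : A, D₁ a c = f (c * a) - f (a * c)) ∧
           (∃ g : StrongDual ℂ B, ∀ b d : B, D₄ b d = g (d * b) - g (b * d))))) ∧
    (∀ (D₁ D₁' : A →L[ℂ] StrongDual ℂ A) (D₄ D₄' : B →L[ℂ] StrongDual ℂ B),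
      (∀ a a' c : A, D₁ (a * a') c = D₁ a' (c * a) + D₁ a (a' * c)) →
      (∀ a a' c : A, D₁' (a * a') c = D₁' a' (c * a) + D₁' a (a' * c)) →
      (∀ b b' d : B, D₄ (b * b') d = D₄ b' (d * b) + D₄ b (b' * d)) →
      (∀ b b' d : B, D₄' (b * b') d = D₄' b' (d * b) + D₄' b (b' * d)) →
      (∀ b b' : B, D₄ b' b + D₄ b b' = 0) →
      (∀ b b' : B, D₄' b' b + D₄' b b' = 0) →
      IsInnerLau φ ((D₁ - D₁').prodMap (D₄ - D₄')) →
        ((∃ f : StrongDual ℂ A, ∀ a c : A, (D₁ - D₁') a c = f (c * a) - f (a * c)) ∧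
         (∃ g : StrongDual ℂ B, ∀ b d : B, (D₄ - D₄') b d = g (d * b) - g (b * d)))) := by
  exact ⟨fun D₁ D₄ h₁ h₄ hc => ⟨isDerLau_prodMap φ h₁ h₄ hc, isInnerLau_prodMap_iff φ D₁ D₄⟩,
    fun D₁ D₁' D₄ D₄' _ _ _ _ _ _ h => (isInnerLau_prodMap_iff φ _ _).mp h⟩

/-- For every derivation `D₁ : A → A*` and every cyclic derivation `D₄ : B → B*`, the map
`D(a,b) = (D₁(a), D₄(b))` is a derivation from `A ⊕_φ B` into its dual, and `D` is inner if
and only if both `D₁` and `D₄` are inner; consequently `H¹(A,A*) ⊕ H¹_c(B,B*)` embeds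
linearly into `H¹(A ⊕_φ B, (A ⊕_φ B)*)`. -/
theorem lau_cyclic_embedding {A B : Type*} [NonUnitalNormedRing A] [NormedSpace ℂ A]
    [IsScalarTower ℂ A A] [SMulCommClass ℂ A A] [CompleteSpace A]
    [NonUnitalNormedRing B] [NormedSpace ℂ B]
    [IsScalarTower ℂ B B] [SMulCommClass ℂ B B] [CompleteSpace B]
    (φ : A →L[ℂ] ℂ) (hφmul : ∀ a a' : A, φ (a * a') = φ a * φ a') (hφne : φ ≠ 0) :
    (∀ (D₁ : A →L[ℂ] StrongDual ℂ A) (D₄ : B →L[ℂ] StrongDual ℂ B),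
      (∀ a a' c : A, D₁ (a * a') c = D₁ a' (c * a) + D₁ a (a' * c)) →
      (∀ b b' d : B, D₄ (b * b') d = D₄ b' (d * b) + D₄ b (b' * d)) →
      (∀ b b' : B, D₄ b' b + D₄ b b' = 0) →
        IsDerLau φ (D₁.prodMap D₄) ∧
        (IsInnerLau φ (D₁.prodMap D₄) ↔
          ((∃ f : StrongDual ℂ A, ∀ a c : A, D₁ a c = f (c * a) - f (a * c)) ∧
           (∃ g : StrongDual ℂ B, ∀ b d : B, D₄ b d = g (d * b) - g (b * d))))) ∧
    (∀ (D₁ D₁' : A →L[ℂ] StrongDual ℂ A) (D₄ D₄' : B →L[ℂ] StrongDual ℂ B),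
      (∀ a a' c : A, D₁ (a * a') c = D₁ a' (c * a) + D₁ a (a' * c)) →
      (∀ a a' c : A, D₁' (a * a') c = D₁' a' (c * a) + D₁' a (a' * c)) →
      (∀ b b' d : B, D₄ (b * b') d = D₄ b' (d * b) + D₄ b (b' * d)) →
      (∀ b b' d : B, D₄' (b * b') d = D₄' b' (d * b) + D₄' b (b' * d)) →
      (∀ b b' : B, D₄ b' b + D₄ b b' = 0) →
      (∀ b b' : B, D₄' b' b + D₄' b b' = 0) →
      IsInnerLau φ ((D₁ - D₁').prodMap (D₄ - D₄')) →
        ((∃ f : StrongDual ℂ A, ∀ a c : A, (D₁ - D₁') a c = f (c * a) - f (a * c)) ∧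
         (∃ g : StrongDual ℂ B, ∀ b d : B, (D₄ - D₄') b d = g (d * b) - g (b * d)))) :=
  lau_cyclic_embedding_general φ
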